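/- Let X_n ⊆ {0,1}^D be a set of n pairwise distinct binary vectors and let r = ⌈√n⌉. Then there exists a seven-layer Boolean threshold network with layer sizes D, r + D, 2r, 2⌈log₂ r⌉, 2r, rD, D (i.e., a composition of six threshold layers) whose composition maps x to x for every x ∈ X_n; in particular, it is a perfect autoencoder for X_n whose middle hidden layer has 2⌈log₂ √n⌉ nodes and whose remaining hidden layers have (D + 5)⌈√n⌉ + D nodes in total. -/

import Mathlib

/-!
Order the distinct words by their binary value `v x = ∑ 2^k x_k` and split the rank `ρ` of a word
as `ρ = q r + m` with `q, m < r`, which is possible since `n ≤ r²`. The first layer compares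
`v x` with the first word of every block of `r` consecutive ranks and outputs the step vector
(unary code) of `q`; the second compares `v x` with the words of block `q`. Any function `S` of
`i` is the affine function of the step vector `h^i` whose weights are the finite differences of
`S`, so the thresholds of the second layer can depend on `q`, and it outputs the unary code of
`m`. Layers three and four pass both codes through binary, which gives the `2⌈log₂ r⌉` bottleneck.
The fifth layer fires at `(p, k)` iff `p = q` and bit `k` of the word of rank `p r + m` is set,
again an affine condition on the two unary codes, and the last layer takes the OR over `p`.
-/

/-- A Boolean threshold function: there are integer weights `a` and an integer
threshold `θ` such that `f x = 1` iff `∑ i, a i * x i ≥ θ` (bits as integers 0/1). -/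
def IsThresholdFun {ι : Type*} [Fintype ι] (f : (ι → Bool) → Bool) : Prop :=
  ∃ (a : ι → ℤ) (θ : ℤ), ∀ x, f x = decide (θ ≤ ∑ i, a i * (if x i then 1 else 0))

/-- A threshold layer: each coordinate function is a Boolean threshold function. -/
def IsThresholdLayer {ι κ : Type*} [Fintype ι] (F : (ι → Bool) → (κ → Bool)) : Prop :=
  ∀ j, IsThresholdFun (fun x => F x j)

/-- The step vector `h^i[s]`: coordinate `j` is 1 iff `j ≤ i`. -/
def stepVec (s i : ℕ) : Fin s → Bool := fun j => decide (j.val ≤ i)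

/-- `i2b d j`: the `d`-bit binary representation of `j`. -/
def i2b (d j : ℕ) : Fin d → Bool := fun k => j.testBit k.val

/-- Integer dot product of a weight vector with a bit vector. -/
def dotInt {ι : Type*} [Fintype ι] (a : ι → ℤ) (x : ι → Bool) : ℤ :=
  ∑ i, a i * (if x i then 1 else 0)


open Finset Function

section Threshold

variable {ι ι' ι'' κ κ' κ'' σ : Type*}

theorem dotInt_sumElim [Fintype ι] [Fintype ι'] (a : ι → ℤ) (b : ι' → ℤ) (u : ι ⊕ ι' → Bool) :
    dotInt (Sum.elim a b) u = dotInt a (u ∘ Sum.inl) + dotInt b (u ∘ Sum.inr) := by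
  simp [dotInt, Fintype.sum_sum_type]

theorem dotInt_prod [Fintype ι] [Fintype σ] (a : σ × ι → ℤ) (u : σ × ι → Bool) :
    dotInt a u = ∑ s, dotInt (fun i => a (s, i)) (fun i => u (s, i)) :=
  Fintype.sum_prod_type _

theorem dotInt_single [Fintype ι] [DecidableEq ι] (i : ι) (u : ι → Bool) :
    dotInt (Pi.single i 1) u = if u i then 1 else 0 := by
  rw [dotInt, Fintype.sum_eq_single i fun j hj => by simp [hj]]
  simp

def thresholdLayer [Fintype ι] (a : κ → ι → ℤ) (θ : κ → ℤ) : (ι → Bool) → κ → Bool :=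
  fun u j => decide (θ j ≤ dotInt (a j) u)

theorem isThresholdLayer_thresholdLayer [Fintype ι] (a : κ → ι → ℤ) (θ : κ → ℤ) :
    IsThresholdLayer (thresholdLayer a θ) :=
  fun j => ⟨a j, θ j, fun _ => rfl⟩

def reindexLayer (e : ι ≃ ι') (e' : κ ≃ κ') (F : (ι → Bool) → κ → Bool) :
    (ι' → Bool) → κ' → Bool :=
  fun u => F (u ∘ e) ∘ e'.symm

theorem IsThresholdLayer.reindex [Fintype ι] [Fintype ι'] (e : ι ≃ ι') (e' : κ ≃ κ')
    {F : (ι → Bool) → κ → Bool} (hF : IsThresholdLayer F) :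
    IsThresholdLayer (reindexLayer e e' F) := by
  intro j
  obtain ⟨a, θ, h⟩ := hF (e'.symm j)
  refine ⟨a ∘ e.symm, θ, fun u => ?_⟩
  simp only [reindexLayer, comp_apply, h]
  rw [← e.sum_comp]
  simp

@[simp]
theorem reindexLayer_reindexLayer (e₁ : ι ≃ ι') (e₂ : κ ≃ κ') (e₃ : ι'' ≃ κ'')
    (F : (ι → Bool) → κ → Bool) (G : (κ → Bool) → ι'' → Bool) (u : ι' → Bool) :
    reindexLayer e₂ e₃ G (reindexLayer e₁ e₂ F u) = reindexLayer e₁ e₃ (G ∘ F) u := by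
  simp [reindexLayer, comp_assoc]


def blockwise (σ : Type*) (F : (ι → Bool) → κ → Bool) : (σ × ι → Bool) → σ × κ → Bool :=
  fun u p => F (fun i => u (p.1, i)) p.2

theorem IsThresholdLayer.blockwise [Fintype ι] [Fintype σ] {F : (ι → Bool) → κ → Bool}
    (hF : IsThresholdLayer F) : IsThresholdLayer (blockwise σ F) := by
  classical
  rintro ⟨s, k⟩
  obtain ⟨a, θ, h⟩ := hF k
  refine ⟨fun p => if p.1 = s then a p.2 else 0, θ, fun u => (h _).trans ?_⟩
  rw [Fintype.sum_prod_type, Fintype.sum_eq_single s fun s' hs' => by simp [hs']]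
  simp

end Threshold

def stepWeights (s : ℕ) (S : ℕ → ℤ) : Fin s → ℤ :=
  fun k => S k - if (k : ℕ) = 0 then 0 else S (k - 1)

theorem dotInt_stepWeights_stepVec {s i : ℕ} (S : ℕ → ℤ) (hi : i < s) :
    dotInt (stepWeights s S) (stepVec s i) = S i := by
  set f : ℕ → ℤ := fun t => if t = 0 then 0 else S (t - 1)
  calc dotInt (stepWeights s S) (stepVec s i)
      = ∑ k ∈ (range s).filter (· ≤ i), (f (k + 1) - f k) := by
        rw [sum_filter,
          ← Fin.sum_univ_eq_sum_range (fun k => if k ≤ i then f (k + 1) - f k else 0)]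
        refine sum_congr rfl fun k _ => ?_
        simp [stepWeights, stepVec, f]
    _ = ∑ k ∈ range (i + 1), (f (k + 1) - f k) := by
        congr 1; ext k; simp; omega
    _ = S i := by rw [sum_range_sub]; simp [f]

def binaryWeights (d : ℕ) : Fin d → ℤ := fun k => 2 ^ (k : ℕ)

theorem dotInt_binaryWeights {d : ℕ} (y : Fin d → Bool) :
    dotInt (binaryWeights d) y = (finFunctionFinEquiv (finTwoEquiv.symm ∘ y) : ℕ) := by
  rw [finFunctionFinEquiv_apply, dotInt]
  push_cast
  refine sum_congr rfl fun k _ => ?_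
  cases h : y k <;> simp [h, binaryWeights, finTwoEquiv]

theorem dotInt_binaryWeights_injective (d : ℕ) : Injective (dotInt (binaryWeights d)) := by
  intro y z h
  simp only [dotInt_binaryWeights, Nat.cast_inj, Fin.val_inj, EmbeddingLike.apply_eq_iff_eq] at h
  exact finTwoEquiv.symm.injective.comp_left h

theorem dotInt_binaryWeights_i2b {d q : ℕ} (hq : q < 2 ^ d) :
    dotInt (binaryWeights d) (i2b d q) = q := by
  have : finTwoEquiv.symm ∘ i2b d q = finFunctionFinEquiv.symm ⟨q, hq⟩ := by
    funext k
    ext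
    simp only [comp_apply, i2b, Nat.testBit_eq_decide_div_mod_eq,
      finFunctionFinEquiv_symm_apply_val]
    rcases Nat.mod_two_eq_zero_or_one (q / 2 ^ (k : ℕ)) with h | h <;> simp [h, finTwoEquiv]
  rw [dotInt_binaryWeights, this, Equiv.apply_symm_apply]

theorem exists_rank {ι α : Type*} [Fintype ι] [LinearOrder α] [NoMaxOrder α] [Nonempty α]
    (V : ι → α) : ∃ (ρ : ι → ℕ) (W : ℕ → α), (∀ i, ρ i < Fintype.card ι) ∧
      (∀ i, W (ρ i) = V i) ∧ ∀ i t, W t ≤ V i ↔ t ≤ ρ i := by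
  classical
  obtain ⟨B, hB⟩ : ∃ B, ∀ i, V i < B := by
    obtain ⟨B, hB⟩ := (Set.finite_range V).bddAbove
    obtain ⟨B', hB'⟩ := exists_gt B
    exact ⟨B', fun i => (hB (Set.mem_range_self i)).trans_lt hB'⟩
  set s := univ.image V
  set e := s.orderIsoOfFin rfl
  have hV : ∀ i, V i ∈ s := fun i => mem_image_of_mem V (mem_univ i)
  refine ⟨fun i => e.symm ⟨V i, hV i⟩, fun t => if h : t < s.card then e ⟨t, h⟩ else B,
    fun i => (e.symm _).isLt.trans_le card_image_le, fun i => by simp, fun i t => ?_⟩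
  dsimp only
  split_ifs with h
  · change ((e ⟨t, h⟩ : s) : α) ≤ ((⟨V i, hV i⟩ : s) : α) ↔ _
    rw [Subtype.coe_le_coe, ← OrderIso.le_symm_apply, Fin.le_def]
  · exact iff_of_false (hB i).not_ge (by have := (e.symm ⟨V i, hV i⟩).isLt; omega)

def stepPair (r q m : ℕ) : Fin 2 × Fin r → Bool := fun p => stepVec r (![q, m] p.1) p.2

section Layers

variable {ι κ σ : Type*} (r : ℕ)

def coarseLayer [Fintype ι] [DecidableEq ι] (v : ι → ℤ) (W : ℕ → ℤ) :
    (ι → Bool) → Fin r ⊕ ι → Bool :=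
  thresholdLayer (Sum.elim (fun _ => v) fun i => Pi.single i 1)
    (Sum.elim (fun j => W (j * r)) fun _ => 1)

def fineLayer [Fintype ι] (v : ι → ℤ) (W : ℕ → ℤ) :
    (Fin r ⊕ ι → Bool) → Fin 2 × Fin r → Bool :=
  thresholdLayer
    (fun | (0, j) => Sum.elim (Pi.single j 1) 0
         | (1, j) => Sum.elim (stepWeights r fun t => -W (t * r + j)) v)
    (fun | (0, _) => 1 | (1, _) => 0)

def unaryToBinary (c : ℕ) : (Fin r → Bool) → Fin c → Bool :=
  thresholdLayer (fun b => stepWeights r fun t => if t.testBit b then 1 else 0) fun _ => 1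

def binaryToUnary (c : ℕ) : (Fin c → Bool) → Fin r → Bool :=
  thresholdLayer (fun _ => binaryWeights c) fun k => k

def selectLayer (code : ℕ → κ → Bool) : (Fin 2 × Fin r → Bool) → Fin r × κ → Bool :=
  thresholdLayer
    (fun p s => stepWeights r
        (![fun t : ℕ => if t = (p.1 : ℕ) then 0 else -2,
          fun t => if code (p.1 * r + t) p.2 then 1 else 0] s.1 : ℕ → ℤ)
      s.2)
    fun _ => 1

def orLayer [Fintype σ] [Fintype κ] [DecidableEq κ] : (σ × κ → Bool) → κ → Bool :=
  thresholdLayer (fun k p => (Pi.single k 1 : κ → ℤ) p.2) fun _ => 1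

variable {r}

theorem coarseLayer_apply [Fintype ι] [DecidableEq ι] {v : ι → ℤ} {W : ℕ → ℤ} {y : ι → Bool}
    {ρ : ℕ} (hr : 0 < r) (hW : ∀ t, W t ≤ dotInt v y ↔ t ≤ ρ) :
    coarseLayer r v W y = Sum.elim (stepVec r (ρ / r)) y := by
  ext (j | i)
  · simp [coarseLayer, thresholdLayer, stepVec, hW, Nat.le_div_iff_mul_le hr]
  · cases h : y i <;> simp [coarseLayer, thresholdLayer, dotInt_single, h]

theorem fineLayer_apply [Fintype ι] {v : ι → ℤ} {W : ℕ → ℤ} {y : ι → Bool} {ρ : ℕ}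
    (hρ : ρ < r * r) (hW : ∀ t, W t ≤ dotInt v y ↔ t ≤ ρ) :
    fineLayer r v W (Sum.elim (stepVec r (ρ / r)) y) = stepPair r (ρ / r) (ρ % r) := by
  classical
  have hq : ρ / r < r := Nat.div_lt_of_lt_mul hρ
  funext ⟨s, j⟩
  fin_cases s
  · cases h : stepVec r (ρ / r) j <;>
      simp [fineLayer, thresholdLayer, stepPair, dotInt_single, h]
  · simp only [fineLayer, thresholdLayer, stepPair, dotInt_sumElim, Sum.elim_comp_inl,
      Sum.elim_comp_inr, dotInt_stepWeights_stepVec _ hq, le_neg_add_iff_add_le, add_zero,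
      Fin.mk_one, Matrix.cons_val_one, Matrix.cons_val_fin_one, hW, stepVec, decide_eq_decide]
    have := Nat.div_add_mod' ρ r
    omega

theorem unaryToBinary_stepVec {c q : ℕ} (hq : q < r) :
    unaryToBinary r c (stepVec r q) = i2b c q := by
  funext b
  cases h : q.testBit b <;>
    simp [unaryToBinary, thresholdLayer, dotInt_stepWeights_stepVec _ hq, i2b, h]

theorem binaryToUnary_i2b {c q : ℕ} (hq : q < 2 ^ c) :
    binaryToUnary r c (i2b c q) = stepVec r q := by
  funext k
  simp [binaryToUnary, thresholdLayer, dotInt_binaryWeights_i2b hq, stepVec]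

theorem blockwise_binaryToUnary_unaryToBinary_stepPair {c q m : ℕ} (hr : r ≤ 2 ^ c) (hq : q < r)
    (hm : m < r) :
    blockwise (Fin 2) (binaryToUnary r c)
      (blockwise (Fin 2) (unaryToBinary r c) (stepPair r q m)) = stepPair r q m := by
  funext ⟨s, k⟩
  have hs : ![q, m] s < r := by fin_cases s <;> assumption
  simp [blockwise, stepPair, unaryToBinary_stepVec hs, binaryToUnary_i2b (hs.trans_le hr)]

theorem selectLayer_stepPair {code : ℕ → κ → Bool} {q m : ℕ} (hq : q < r) (hm : m < r) :
    selectLayer r code (stepPair r q m) =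
      fun p => decide (q = p.1) && code (p.1 * r + m) p.2 := by
  funext ⟨p, k⟩
  simp only [selectLayer, thresholdLayer, dotInt_prod, stepPair, Fin.sum_univ_two,
    Matrix.cons_val_zero, Matrix.cons_val_one, Matrix.cons_val_fin_one,
    dotInt_stepWeights_stepVec _ hq, dotInt_stepWeights_stepVec _ hm]
  by_cases hp : q = p <;> cases code (p * r + m) k <;> simp [hp]

theorem orLayer_apply [Fintype σ] [Fintype κ] [DecidableEq κ] (u : σ × κ → Bool) (k : κ) :
    orLayer u k = decide (∃ s, u (s, k)) := by
  simp [orLayer, thresholdLayer, dotInt_prod, dotInt_single, sum_boole, one_le_card,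
    filter_nonempty_iff]

theorem orLayer_selectLayer_stepPair [Fintype κ] [DecidableEq κ] {code : ℕ → κ → Bool} {q m : ℕ}
    (hq : q < r) (hm : m < r) :
    orLayer (selectLayer r code (stepPair r q m)) = code (q * r + m) := by
  funext k
  rw [orLayer_apply, selectLayer_stepPair hq hm, Bool.eq_iff_iff]
  simp only [decide_eq_true_eq, Bool.and_eq_true]
  exact ⟨fun ⟨s, hs, h⟩ => hs ▸ h, fun h => ⟨⟨q, hq⟩, rfl, h⟩⟩

end Layers

theorem le_ceil_sqrt_mul_self (n : ℕ) : n ≤ ⌈Real.sqrt n⌉₊ * ⌈Real.sqrt n⌉₊ := by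
  have h : (n : ℝ) ≤ ⌈Real.sqrt n⌉₊ * ⌈Real.sqrt n⌉₊ :=
    calc (n : ℝ) = Real.sqrt n * Real.sqrt n := (Real.mul_self_sqrt n.cast_nonneg).symm
      _ ≤ _ := mul_self_le_mul_self (Real.sqrt_nonneg _) (Nat.le_ceil _)
  exact_mod_cast h

theorem stmt_19_general (D n r : ℕ) (hr : r = ⌈Real.sqrt n⌉₊)
    (x : Fin n → Fin D → Bool) :
    ∃ (F₁ : (Fin D → Bool) → (Fin (r + D) → Bool))
      (F₂ : (Fin (r + D) → Bool) → (Fin (2 * r) → Bool))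
      (F₃ : (Fin (2 * r) → Bool) → (Fin (2 * Nat.clog 2 r) → Bool))
      (F₄ : (Fin (2 * Nat.clog 2 r) → Bool) → (Fin (2 * r) → Bool))
      (F₅ : (Fin (2 * r) → Bool) → (Fin (r * D) → Bool))
      (F₆ : (Fin (r * D) → Bool) → (Fin D → Bool)),
      IsThresholdLayer F₁ ∧ IsThresholdLayer F₂ ∧ IsThresholdLayer F₃ ∧
      IsThresholdLayer F₄ ∧ IsThresholdLayer F₅ ∧ IsThresholdLayer F₆ ∧
      ∀ i, F₆ (F₅ (F₄ (F₃ (F₂ (F₁ (x i)))))) = x i := by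
  obtain ⟨ρ, W, hρn, hWρ, hW⟩ := exists_rank fun i => dotInt (binaryWeights D) (x i)
  have hx : FactorsThrough x ρ := fun i j hij =>
    dotInt_binaryWeights_injective D (by rw [← hWρ, ← hWρ, hij])
  set c := Nat.clog 2 r
  set code := extend ρ x fun _ _ => false
  refine ⟨reindexLayer (.refl _) finSumFinEquiv (coarseLayer r (binaryWeights D) W),
    reindexLayer finSumFinEquiv finProdFinEquiv (fineLayer r (binaryWeights D) W),
    reindexLayer finProdFinEquiv finProdFinEquiv (blockwise (Fin 2) (unaryToBinary r c)),
    reindexLayer finProdFinEquiv finProdFinEquiv (blockwise (Fin 2) (binaryToUnary r c)),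
    reindexLayer finProdFinEquiv finProdFinEquiv (selectLayer r code),
    reindexLayer finProdFinEquiv (.refl _) orLayer, ?_, ?_, ?_, ?_, ?_, ?_, fun i => ?_⟩
  iterate 2 exact .reindex _ _ (isThresholdLayer_thresholdLayer _ _)
  iterate 2 exact .reindex _ _ (.blockwise (isThresholdLayer_thresholdLayer _ _))
  iterate 2 exact .reindex _ _ (isThresholdLayer_thresholdLayer _ _)
  have hρ : ρ i < r * r := (hρn i).trans_le (by simpa [hr] using le_ceil_sqrt_mul_self n)
  have hr0 : 0 < r := Nat.pos_of_mul_pos_left (Nat.zero_lt_of_lt hρ)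
  have hq : ρ i / r < r := Nat.div_lt_of_lt_mul hρ
  have hm : ρ i % r < r := Nat.mod_lt _ hr0
  simp only [reindexLayer_reindexLayer]
  simp only [reindexLayer, Equiv.coe_refl, Equiv.refl_symm, comp_id, comp_apply]
  rw [coarseLayer_apply hr0 (hW i), fineLayer_apply hρ (hW i),
    blockwise_binaryToUnary_unaryToBinary_stepPair (Nat.le_pow_clog one_lt_two r) hq hm,
    orLayer_selectLayer_stepPair hq hm, Nat.div_add_mod']
  exact hx.extend_apply _ i

/-- a seven-layer BTN perfect autoencoder with layer sizes
`D`, `r+D`, `2r`, `2⌈log₂ r⌉`, `2r`, `rD`, `D`, where `r = ⌈√n⌉`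
(so the middle hidden layer has `2⌈log₂ √n⌉` nodes). -/
theorem stmt_19 (D n r : ℕ) (hr : r = ⌈Real.sqrt n⌉₊)
    (x : Fin n → Fin D → Bool) (hx : Function.Injective x) :
    ∃ (F₁ : (Fin D → Bool) → (Fin (r + D) → Bool))
      (F₂ : (Fin (r + D) → Bool) → (Fin (2 * r) → Bool))
      (F₃ : (Fin (2 * r) → Bool) → (Fin (2 * Nat.clog 2 r) → Bool))
      (F₄ : (Fin (2 * Nat.clog 2 r) → Bool) → (Fin (2 * r) → Bool))
      (F₅ : (Fin (2 * r) → Bool) → (Fin (r * D) → Bool))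
      (F₆ : (Fin (r * D) → Bool) → (Fin D → Bool)),
      IsThresholdLayer F₁ ∧ IsThresholdLayer F₂ ∧ IsThresholdLayer F₃ ∧
      IsThresholdLayer F₄ ∧ IsThresholdLayer F₅ ∧ IsThresholdLayer F₆ ∧
      ∀ i, F₆ (F₅ (F₄ (F₃ (F₂ (F₁ (x i)))))) = x i :=
  stmt_19_general D n r hr x
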